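/- arXiv:0801.3837 — 2 statements merged into one kernel-verified Lean document; each statement's English description precedes it below -/
import Mathlib

section
/- Let K random variables X_1,...,X_K and Z be such that the joint distribution of (X_1,...,X_K,Z) is invariant under permutations of the indices 1,...,K. Then for any nested subsets A ⊆ B ⊆ {1,...,K}, (1/|A|)·H(X_A | Z, X_{K∖A}) ≤ (1/|B|)·H(X_B | Z, X_{K∖B}), where X_S denotes the tuple of variables indexed by S. -/
open Finset
open scoped Classical BigOperators

/-- Probability mass function of the random variable `X` under the (finite) measure `μ`. -/
noncomputable def distOf {Ω α : Type*} [Fintype Ω] (μ : Ω → ℝ) (X : Ω → α) (a : α) : ℝ :=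
  ∑ ω, if X ω = a then μ ω else 0

/-- Shannon entropy (natural log) of a finite-valued random variable. -/
noncomputable def ent {Ω α : Type*} [Fintype Ω] [Fintype α] (μ : Ω → ℝ) (X : Ω → α) : ℝ :=
  ∑ a, Real.negMulLog (distOf μ X a)

/-- Conditional Shannon entropy `H(X | Z)`. -/
noncomputable def condEnt {Ω α γ : Type*} [Fintype Ω] [Fintype α] [Fintype γ]
    (μ : Ω → ℝ) (X : Ω → α) (Z : Ω → γ) : ℝ :=
  ent μ (fun ω => (X ω, Z ω)) - ent μ Z

/-- The tuple of random variables indexed by the finite set `A`. -/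
def restr {Ω ι α : Type*} (X : ι → Ω → α) (A : Finset ι) : Ω → (A → α) :=
  fun ω i => X i ω

/-! Write `f S = H(X_S | Z, X_{Sᶜ}) = H(X, Z) - H(Z, X_{Sᶜ})`. Exchangeability makes `f S` depend
only on `#S`, and submodularity of entropy makes `f` supermodular, so the increments
`f (insert j S) - f S` grow with `#S`. As `f ∅ = 0`, `f S` is then at most `#S` times the next
increment, which says that `f S / #S` increases along every chain `S ⊂ insert j S`. -/

section Distribution
variable {Ω β : Type*} [Fintype Ω] (μ : Ω → ℝ)
open Real

lemma sum_mul_comp_eq_sum_distOf [Fintype β] (Y : Ω → β) (g : β → ℝ) :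
    ∑ ω, μ ω * g (Y ω) = ∑ y, distOf μ Y y * g y := by
  simp only [distOf, Finset.sum_mul, ite_mul, zero_mul]
  rw [Finset.sum_comm]
  simp

lemma distOf_nonneg (hμ : ∀ ω, 0 ≤ μ ω) (Y : Ω → β) (y : β) : 0 ≤ distOf μ Y y :=
  Finset.sum_nonneg fun ω _ => ite_nonneg (hμ ω) le_rfl

lemma le_distOf_apply (hμ : ∀ ω, 0 ≤ μ ω) (Y : Ω → β) (ω : Ω) :
    μ ω ≤ distOf μ Y (Y ω) := by
  simpa [distOf] using Finset.single_le_sum (f := fun ω' => if Y ω' = Y ω then μ ω' else 0)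
    (fun ω' _ => ite_nonneg (hμ ω') le_rfl) (Finset.mem_univ ω)

lemma sum_distOf [Fintype β] (hμ : ∑ ω, μ ω = 1) (Y : Ω → β) : ∑ y, distOf μ Y y = 1 := by
  simpa [hμ] using (sum_mul_comp_eq_sum_distOf μ Y 1).symm

lemma sum_distOf_pair {γ : Type*} [Fintype γ] (W : Ω → β) (U : Ω → γ) (c : β) :
    ∑ a, distOf μ (fun ω => (W ω, U ω)) (c, a) = distOf μ W c := by
  simp only [distOf, Prod.mk.injEq]
  rw [Finset.sum_comm]
  simp [ite_and]

lemma ent_eq_neg_sum_mul_log [Fintype β] (Y : Ω → β) :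
    ent μ Y = -∑ ω, μ ω * log (distOf μ Y (Y ω)) := by
  rw [sum_mul_comp_eq_sum_distOf μ Y fun y => log (distOf μ Y y)]
  simp [ent, negMulLog, Finset.sum_neg_distrib]

lemma ent_congr_of_eq_iff {δ : Type*} [Fintype β] [Fintype δ] {Y : Ω → β} {Y' : Ω → δ}
    (h : ∀ ω ω', Y ω' = Y ω ↔ Y' ω' = Y' ω) : ent μ Y = ent μ Y' := by
  simp only [ent_eq_neg_sum_mul_log, distOf, h]

lemma ent_comp_congr {δ : Type*} [Fintype β] [Fintype δ] {W W' : Ω → β}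
    (hW : ∀ w, distOf μ W w = distOf μ W' w) (h : β → δ) :
    ent μ (fun ω => h (W ω)) = ent μ (fun ω => h (W' ω)) := by
  have hdist : ∀ (V : Ω → β) d, distOf μ (fun ω => h (V ω)) d
      = ∑ w, distOf μ V w * if h w = d then 1 else 0 := fun V d => by
    rw [← sum_mul_comp_eq_sum_distOf]
    simp [distOf]
  simp only [ent, hdist, hW]

end Distribution

section Submodular
variable {Ω A B C : Type*} [Fintype Ω] [Fintype A] [Fintype B] [Fintype C] (μ : Ω → ℝ)
open Real

theorem ent_submodular (hμ0 : ∀ ω, 0 ≤ μ ω) (hμ1 : ∑ ω, μ ω = 1)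
    (W : Ω → C) (U : Ω → A) (V : Ω → B) :
    ent μ (fun ω => (W ω, U ω, V ω)) + ent μ W
      ≤ ent μ (fun ω => (W ω, U ω)) + ent μ (fun ω => (W ω, V ω)) := by
  set T := fun ω => (W ω, U ω, V ω)
  set pT := distOf μ T
  set pWU := distOf μ (fun ω => (W ω, U ω))
  set pWV := distOf μ (fun ω => (W ω, V ω))
  set pW := distOf μ W
  -- `(W, U, V)` recoupled so that `U`, `V` are conditionally independent given `W`; Gibbs'
  -- inequality against this law is the submodularity
  set q : C × A × B → ℝ := fun t => pWU (t.1, t.2.1) * pWV (t.1, t.2.2) / pW t.1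
  have hq : ∑ t, q t = 1 := by
    simp only [q, Fintype.sum_prod_type, ← Finset.sum_div, ← Finset.sum_mul_sum, pWU, pWV, pW,
      sum_distOf_pair, mul_self_div_self]
    exact sum_distOf μ hμ1 W
  have hgibbs : ∀ ω, μ ω * (log (pWU (W ω, U ω)) + log (pWV (W ω, V ω)) - log (pT (T ω))
      - log (pW (W ω))) ≤ μ ω * (q (T ω) / pT (T ω) - 1) := by
    intro ω
    rcases (hμ0 ω).eq_or_lt with hω | hω
    · simp [← hω]
    have hWU : 0 < pWU (W ω, U ω) := hω.trans_le (le_distOf_apply μ hμ0 _ ω)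
    have hWV : 0 < pWV (W ω, V ω) := hω.trans_le (le_distOf_apply μ hμ0 _ ω)
    have hW : 0 < pW (W ω) := hω.trans_le (le_distOf_apply μ hμ0 W ω)
    have hT : 0 < pT (T ω) := hω.trans_le (le_distOf_apply μ hμ0 T ω)
    refine mul_le_mul_of_nonneg_left ?_ hω.le
    calc _ = log (pWU (W ω, U ω) * pWV (W ω, V ω) / pW (W ω) / pT (T ω)) := by
          rw [log_div, log_div, log_mul]; ring; all_goals positivity
      _ ≤ _ := log_le_sub_one_of_pos (by positivity)
  have hsum : ∑ ω, μ ω * (q (T ω) / pT (T ω)) ≤ 1 := by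
    rw [sum_mul_comp_eq_sum_distOf μ T fun t => q t / pT t, ← hq]
    refine Finset.sum_le_sum fun t _ => ?_
    rcases eq_or_ne (pT t) 0 with h | h
    · rw [h, div_zero, mul_zero]
      exact div_nonneg (mul_nonneg (distOf_nonneg μ hμ0 _ _) (distOf_nonneg μ hμ0 _ _))
        (distOf_nonneg μ hμ0 _ _)
    · rw [mul_div_cancel₀ _ h]
  have hbound := Finset.sum_le_sum fun ω (_ : ω ∈ Finset.univ) => hgibbs ω
  simp only [mul_sub, mul_add, Finset.sum_add_distrib, Finset.sum_sub_distrib, mul_one, hμ1]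
    at hbound
  rw [ent_eq_neg_sum_mul_log μ T, ent_eq_neg_sum_mul_log μ W,
    ent_eq_neg_sum_mul_log μ (fun ω => (W ω, U ω)),
    ent_eq_neg_sum_mul_log μ (fun ω => (W ω, V ω))]
  linarith

end Submodular

section RatioMonotone
variable {ι : Type*} [DecidableEq ι] {f : Finset ι → ℝ}

lemma le_card_mul_sub_insert (hf0 : f ∅ = 0)
    (hexch : ∀ S i j, i ∉ S → j ∉ S → f (insert i S) = f (insert j S))
    (hsuper : ∀ S i j, i ≠ j → i ∉ S → j ∉ S →
      f (insert i S) + f (insert j S) ≤ f (insert i (insert j S)) + f S)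
    (S : Finset ι) {j : ι} (hj : j ∉ S) : f S ≤ #S * (f (insert j S) - f S) := by
  induction S using Finset.induction_on with
  | empty => simp [hf0]
  | insert i S hiS ih =>
    have hjS : j ∉ S := fun h => hj (mem_insert_of_mem h)
    have hji : j ≠ i := fun h => hj (h ▸ mem_insert_self i S)
    have hincr : f (insert i S) - f S ≤ f (insert j (insert i S)) - f (insert i S) := by
      linarith [hsuper S j i hji hjS hiS, hexch S i j hiS hjS]
    have hscaled := mul_le_mul_of_nonneg_left hincr (by positivity : (0 : ℝ) ≤ #S + 1)
    have hprev := ih hjS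
    rw [← hexch S i j hiS hjS] at hprev
    rw [card_insert_of_notMem hiS, Nat.cast_succ]
    linarith

lemma div_card_le_div_card_of_subset
    (hstep : ∀ S j, j ∉ S → f S ≤ #S * (f (insert j S) - f S))
    {A B : Finset ι} (hA : A.Nonempty) (hAB : A ⊆ B) : f A / #A ≤ f B / #B := by
  rw [← union_sdiff_of_subset hAB]
  generalize B \ A = D
  induction D using Finset.induction_on with
  | empty => simp
  | insert j D _ ih =>
    rw [union_insert]
    by_cases hj : j ∈ A ∪ D
    · rwa [insert_eq_of_mem hj]
    refine ih.trans ?_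
    have hpos : (0 : ℝ) < #(A ∪ D) := by exact_mod_cast (hA.mono subset_union_left).card_pos
    rw [card_insert_of_notMem hj, div_le_div_iff₀ hpos (by positivity)]
    push_cast
    nlinarith [hstep _ j hj]

end RatioMonotone

lemma restr_eq_restr_iff {Ω ι α : Type*} (X : ι → Ω → α) (S : Finset ι) (ω ω' : Ω) :
    restr X S ω = restr X S ω' ↔ ∀ i ∈ S, X i ω = X i ω' := by
  simp [restr, funext_iff]

section Restriction
variable {Ω ι α γ : Type*} [Fintype Ω] [Fintype α] [Fintype γ] [DecidableEq ι]
  (μ : Ω → ℝ) (X : ι → Ω → α) (Z : Ω → γ)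

lemma ent_restr_submodular (hμ0 : ∀ ω, 0 ≤ μ ω) (hμ1 : ∑ ω, μ ω = 1)
    (U : Finset ι) (i j : ι) :
    ent μ (fun ω => (Z ω, restr X (insert i (insert j U)) ω))
        + ent μ (fun ω => (Z ω, restr X U ω))
      ≤ ent μ (fun ω => (Z ω, restr X (insert i U) ω))
        + ent μ (fun ω => (Z ω, restr X (insert j U) ω)) := by
  have h := ent_submodular μ hμ0 hμ1 (fun ω => (Z ω, restr X U ω)) (X i) (X j)
  have e1 : ent μ (fun ω => ((Z ω, restr X U ω), X i ω, X j ω))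
      = ent μ (fun ω => (Z ω, restr X (insert i (insert j U)) ω)) :=
    ent_congr_of_eq_iff μ fun _ _ => by
      simp only [Prod.mk.injEq, restr_eq_restr_iff, mem_insert, forall_eq_or_imp]; tauto
  have e2 : ∀ k, ent μ (fun ω => ((Z ω, restr X U ω), X k ω))
      = ent μ (fun ω => (Z ω, restr X (insert k U) ω)) := fun k =>
    ent_congr_of_eq_iff μ fun _ _ => by
      simp only [Prod.mk.injEq, restr_eq_restr_iff, mem_insert, forall_eq_or_imp]; tauto
  rwa [e1, e2, e2] at h

lemma ent_restr_eq_of_card_eq [Fintype ι]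
    (hperm : ∀ (σ : Equiv.Perm ι) (v : ι → α) (z : γ),
      distOf μ (fun ω => ((fun i => X (σ i) ω), Z ω)) (v, z)
        = distOf μ (fun ω => ((fun i => X i ω), Z ω)) (v, z))
    {T T' : Finset ι} (h : #T = #T') :
    ent μ (fun ω => (Z ω, restr X T ω)) = ent μ (fun ω => (Z ω, restr X T' ω)) := by
  obtain ⟨σ, rfl⟩ := Equiv.Perm.exists_map_finset_eq T' T h.symm
  calc ent μ (fun ω => (Z ω, restr X (T'.map σ.toEmbedding) ω))
      = ent μ (fun ω => (Z ω, restr (fun i => X (σ i)) T' ω)) :=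
        ent_congr_of_eq_iff μ fun _ _ => by
          simp only [Prod.mk.injEq, restr_eq_restr_iff, forall_mem_map, Equiv.coe_toEmbedding]
    _ = ent μ (fun ω => (Z ω, restr X T' ω)) := by
        have hW : ∀ w, distOf μ (fun ω => ((fun i => X (σ i) ω), Z ω)) w
            = distOf μ (fun ω => ((fun i => X i ω), Z ω)) w := fun w => hperm σ w.1 w.2
        exact ent_comp_congr μ hW fun q => (q.2, fun t : T' => q.1 t)

end Restriction

noncomputable def condEntGivenCompl {Ω ι α γ : Type*} [Fintype Ω] [Fintype ι] [DecidableEq ι]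
    [Fintype α] [Fintype γ] (μ : Ω → ℝ) (X : ι → Ω → α) (Z : Ω → γ) (S : Finset ι) : ℝ :=
  condEnt μ (restr X S) (fun ω => (Z ω, restr X Sᶜ ω))

section GivenCompl
variable {Ω ι α γ : Type*} [Fintype Ω] [Fintype ι] [DecidableEq ι] [Fintype α] [Fintype γ]
  (μ : Ω → ℝ) (X : ι → Ω → α) (Z : Ω → γ)

lemma condEntGivenCompl_eq_sub (S : Finset ι) :
    condEntGivenCompl μ X Z S
      = ent μ (fun ω => ((fun i => X i ω), Z ω)) - ent μ (fun ω => (Z ω, restr X Sᶜ ω)) := by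
  refine congrArg (· - _) (ent_congr_of_eq_iff μ fun ω ω' => ?_)
  simp only [Prod.mk.injEq, restr_eq_restr_iff]
  simp only [funext_iff, mem_compl]
  constructor
  · rintro ⟨hS, hZ, hSc⟩
    exact ⟨fun i => if hi : i ∈ S then hS i hi else hSc i hi, hZ⟩
  · rintro ⟨hX, hZ⟩
    exact ⟨fun i _ => hX i, hZ, fun i _ => hX i⟩

lemma condEntGivenCompl_empty : condEntGivenCompl μ X Z ∅ = 0 := by
  rw [condEntGivenCompl_eq_sub, sub_eq_zero]
  exact ent_congr_of_eq_iff μ fun _ _ => by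
    simp only [Prod.mk.injEq, restr_eq_restr_iff, compl_empty, mem_univ, forall_const]
    rw [funext_iff, and_comm]

lemma condEntGivenCompl_insert_eq_insert
    (hperm : ∀ (σ : Equiv.Perm ι) (v : ι → α) (z : γ),
      distOf μ (fun ω => ((fun i => X (σ i) ω), Z ω)) (v, z)
        = distOf μ (fun ω => ((fun i => X i ω), Z ω)) (v, z))
    {S : Finset ι} {i j : ι} (hi : i ∉ S) (hj : j ∉ S) :
    condEntGivenCompl μ X Z (insert i S) = condEntGivenCompl μ X Z (insert j S) := by
  rw [condEntGivenCompl_eq_sub, condEntGivenCompl_eq_sub, ent_restr_eq_of_card_eq μ X Z hperm]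
  rw [card_compl, card_compl, card_insert_of_notMem hi, card_insert_of_notMem hj]

lemma condEntGivenCompl_supermodular (hμ0 : ∀ ω, 0 ≤ μ ω) (hμ1 : ∑ ω, μ ω = 1)
    {S : Finset ι} {i j : ι} (hij : i ≠ j) (hi : i ∉ S) (hj : j ∉ S) :
    condEntGivenCompl μ X Z (insert i S) + condEntGivenCompl μ X Z (insert j S)
      ≤ condEntGivenCompl μ X Z (insert i (insert j S)) + condEntGivenCompl μ X Z S := by
  simp only [condEntGivenCompl_eq_sub]
  set U := (insert i (insert j S))ᶜ
  have hSc : Sᶜ = insert i (insert j U) := by ext; simp only [U, mem_compl, mem_insert]; grind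
  have hiSc : (insert i S)ᶜ = insert j U := by ext; simp only [U, mem_compl, mem_insert]; grind
  have hjSc : (insert j S)ᶜ = insert i U := by ext; simp only [U, mem_compl, mem_insert]; grind
  rw [hSc, hiSc, hjSc]
  linarith [ent_restr_submodular μ X Z hμ0 hμ1 U i j]

end GivenCompl

theorem stmt0 {Ω α γ : Type*} [Fintype Ω] [Fintype α] [Fintype γ] {K : ℕ}
    (μ : Ω → ℝ) (hμ0 : ∀ ω, 0 ≤ μ ω) (hμ1 : ∑ ω, μ ω = 1)
    (X : Fin K → Ω → α) (Z : Ω → γ)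
    (hperm : ∀ (π : Equiv.Perm (Fin K)) (v : Fin K → α) (z : γ),
      distOf μ (fun ω => ((fun i => X (π i) ω), Z ω)) (v, z)
        = distOf μ (fun ω => ((fun i => X i ω), Z ω)) (v, z))
    (A B : Finset (Fin K)) (hA : A.Nonempty) (hAB : A ⊆ B) :
    (1 / (A.card : ℝ)) *
        condEnt μ (restr X A) (fun ω => (Z ω, restr X Aᶜ ω))
      ≤ (1 / (B.card : ℝ)) *
        condEnt μ (restr X B) (fun ω => (Z ω, restr X Bᶜ ω)) := by
  have hstep := le_card_mul_sub_insert (condEntGivenCompl_empty μ X Z)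
    (fun _ _ _ hi hj => condEntGivenCompl_insert_eq_insert μ X Z hperm hi hj)
    (fun _ _ _ hij hi hj => condEntGivenCompl_supermodular μ X Z hμ0 hμ1 hij hi hj)
  rw [one_div_mul_eq_div, one_div_mul_eq_div]
  exact div_card_le_div_card_of_subset hstep hA hAB
end

section
/- With the same MPMI decoder setup, for every set A of indices disjoint from the maximizing coalition K̂, İ(x_A; (y, x_{K̂}) | s,w) ≤ |A|·(R+Δ). -/
open Finset

/-- Lemma 3 (second part), stated abstractly.  `J S` plays the role of the empirical
multi-information score `İ(x_S; y | s,w)`, `g A` plays the role of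
`İ(x_A; (y, x_{K̂}) | s,w)` for `A` disjoint from `K̂` (linked to `J` by the chain rule
`İ(x_{K̂∪A}; y|s,w) = İ(x_{K̂}; y|s,w) + İ(x_A;(y,x_{K̂})|s,w)`), and `K̂` maximizes the
penalized criterion `J(S) − |S|(R+Δ)` over all coalitions (score `0` for `S = ∅`).
Then no extension of `K̂` is significant: `İ(x_A;(y,x_{K̂})|s,w) ≤ |A|(R+Δ)`. -/
theorem stmt12 {ι : Type*} [Fintype ι] [DecidableEq ι]
    (J : Finset ι → ℝ) (R Δ : ℝ) (Khat : Finset ι) (g : Finset ι → ℝ)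
    (hempty : J ∅ = 0)
    (hchain : ∀ A : Finset ι, Disjoint A Khat → g A = J (Khat ∪ A) - J Khat)
    (hmax : ∀ S : Finset ι,
      J S - (S.card : ℝ) * (R + Δ) ≤ J Khat - (Khat.card : ℝ) * (R + Δ)) :
    ∀ A : Finset ι, Disjoint A Khat → g A ≤ (A.card : ℝ) * (R + Δ) := by
  intro A hA
  have h := hmax (Khat ∪ A)
  rw [card_union_of_disjoint hA.symm] at h
  rw [hchain A hA]
  push_cast at h
  linarith
end
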